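/- arXiv:1208.5956 — 5 statements merged into one kernel-verified Lean document; each statement's English description precedes it below -/
import Mathlib

section
/- Fix natural numbers n and m with 1 ≤ n ≤ m and a sample f : Fin n → ZMod m. Then every player is seated: for each player i the displacement d f i is well defined and satisfies d f i ≤ i, and the map sending each player i to its final chair f i + d f i is injective. -/
/-! Among the `i + 1` chairs `f i, f i + 1, …, f i + i` (distinct because `i < n ≤ m`) at most `i`
are taken by the earlier players, so player `i` finds a free one after at most `i` rejections.
Injectivity holds because every player avoids the chairs of all earlier players. -/

/-- `reject f i` is the number of rejections suffered by player `i` in the sample `f`: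
the least `j : ℕ` such that the chair `f i + j` is not the final chair of any
earlier player `i' < i` (each player `i'` ends up at chair `f i' + reject f i'`). -/
noncomputable def reject {n m : ℕ} (f : Fin n → ZMod m) : Fin n → ℕ
  | i => sInf {j : ℕ | ∀ i' : Fin n, i' < i → f i + (j : ZMod m) ≠ f i' + (reject f i' : ZMod m)}
termination_by i => i.val

theorem ZMod.exists_le_add_natCast_notMem {m k : ℕ} (hkm : k < m) (a : ZMod m)
    (s : Finset (ZMod m)) (hs : s.card ≤ k) : ∃ j ≤ k, a + (j : ZMod m) ∉ s := by
  by_contra! hall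
  have hinj : Set.InjOn (fun j : ℕ => a + (j : ZMod m)) (Finset.range (k + 1) : Set ℕ) := by
    intro j₁ hj₁ j₂ hj₂ h
    simp only [Finset.coe_range, Set.mem_Iio] at hj₁ hj₂
    have := (ZMod.natCast_eq_natCast_iff' j₁ j₂ m).mp (add_left_cancel h)
    rwa [Nat.mod_eq_of_lt (by omega), Nat.mod_eq_of_lt (by omega)] at this
  have hmaps : Set.MapsTo (fun j : ℕ => a + (j : ZMod m)) (Finset.range (k + 1) : Set ℕ) s :=
    fun j hj => hall j (Nat.lt_succ_iff.mp (Finset.mem_range.mp hj))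
  have := Finset.card_le_card_of_injOn _ hmaps hinj
  rw [Finset.card_range] at this
  omega

section

variable {n m : ℕ} (f : Fin n → ZMod m)

def freeShifts (i : Fin n) : Set ℕ :=
  {j : ℕ | ∀ i' : Fin n, i' < i → f i + (j : ZMod m) ≠ f i' + (reject f i' : ZMod m)}

theorem reject_eq_sInf_freeShifts (i : Fin n) : reject f i = sInf (freeShifts f i) := by
  rw [reject, freeShifts]

theorem exists_mem_freeShifts_le (h : n ≤ m) (i : Fin n) : ∃ j ≤ (i : ℕ), j ∈ freeShifts f i := by
  obtain ⟨j, hj, hfree⟩ := ZMod.exists_le_add_natCast_notMem (by omega) (f i)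
    ((Finset.Iio i).image fun i' => f i' + (reject f i' : ZMod m))
    (Finset.card_image_le.trans (Fin.card_Iio i).le)
  exact ⟨j, hj, fun i' hi' heq =>
    hfree (Finset.mem_image.mpr ⟨i', Finset.mem_Iio.mpr hi', heq.symm⟩)⟩

theorem freeShifts_nonempty (h : n ≤ m) (i : Fin n) : (freeShifts f i).Nonempty :=
  let ⟨j, _, hj⟩ := exists_mem_freeShifts_le f h i
  ⟨j, hj⟩

theorem reject_le (h : n ≤ m) (i : Fin n) : reject f i ≤ i := by
  obtain ⟨j, hj, hfree⟩ := exists_mem_freeShifts_le f h i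
  rw [reject_eq_sInf_freeShifts]
  exact (Nat.sInf_le hfree).trans hj

theorem add_reject_ne_of_lt (h : n ≤ m) {i' i : Fin n} (hi : i' < i) :
    f i + (reject f i : ZMod m) ≠ f i' + (reject f i' : ZMod m) := by
  rw [reject_eq_sInf_freeShifts f i]
  exact Nat.sInf_mem (freeShifts_nonempty f h i) i' hi

theorem add_reject_injective (h : n ≤ m) :
    Function.Injective (fun i : Fin n => f i + (reject f i : ZMod m)) := by
  intro i₁ i₂ heq
  by_contra hne
  rcases lt_or_gt_of_ne hne with hlt | hlt
  · exact add_reject_ne_of_lt f h hlt heq.symm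
  · exact add_reject_ne_of_lt f h hlt heq

end

theorem stmt2_general (n m : ℕ) (h2 : n ≤ m) (f : Fin n → ZMod m) :
    (∀ i : Fin n,
      {j : ℕ | ∀ i' : Fin n, i' < i →
          f i + (j : ZMod m) ≠ f i' + (reject f i' : ZMod m)}.Nonempty ∧
      reject f i ≤ i) ∧
    Function.Injective (fun i : Fin n => f i + (reject f i : ZMod m)) :=
  ⟨fun i => ⟨freeShifts_nonempty f h2 i, reject_le f h2 i⟩, add_reject_injective f h2⟩

theorem stmt2 (n m : ℕ) (h1 : 1 ≤ n) (h2 : n ≤ m) (f : Fin n → ZMod m) :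
    (∀ i : Fin n,
      {j : ℕ | ∀ i' : Fin n, i' < i →
          f i + (j : ZMod m) ≠ f i' + (reject f i' : ZMod m)}.Nonempty ∧
      reject f i ≤ i) ∧
    Function.Injective (fun i : Fin n => f i + (reject f i : ZMod m)) :=
  stmt2_general n m h2 f
end

section
/- Fix natural numbers n and m with 1 ≤ n ≤ m, a sample f : Fin n → ZMod m, and a permutation σ of Fin n. Then the total number of rejections is independent of the order in which the players are seated: D (f ∘ σ) = D f. (In particular, the simultaneous musical-chairs version of the game, in which all players arrive before any searching begins, suffers the same total number of rejections as the sequential version.) -/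
/-- The total number of rejections of the sample `f`. -/
noncomputable def totalRejections {n m : ℕ} (f : Fin n → ZMod m) : ℕ :=
  ∑ i, reject f i

namespace MusicalChairs

open Finset

variable {m : ℕ}

noncomputable def park (O : Finset (ZMod m)) (a : ZMod m) : ℕ :=
  sInf {j : ℕ | a + (j : ZMod m) ∉ O}

lemma park_eq_of_forall {O : Finset (ZMod m)} {a : ZMod m} {k : ℕ} (hk : a + (k : ZMod m) ∉ O)
    (hlt : ∀ j < k, a + (j : ZMod m) ∈ O) : park O a = k :=
  le_antisymm (Nat.sInf_le hk) (le_csInf ⟨k, hk⟩ fun _ hj => not_lt.mp fun h => hj (hlt _ h))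

lemma add_park_notMem {O : Finset (ZMod m)} (hO : O.card < m) (a : ZMod m) :
    a + (park O a : ZMod m) ∉ O := by
  obtain ⟨k, rfl⟩ : ∃ k, m = k + 1 := Nat.exists_eq_add_one.mpr (by omega)
  obtain ⟨c, -, hc⟩ := exists_mem_notMem_of_card_lt_card (s := O) (t := univ)
    (by rwa [card_univ, ZMod.card])
  refine Nat.sInf_mem (s := {j : ℕ | a + (j : ZMod (k + 1)) ∉ O}) ⟨(c - a).val, ?_⟩
  simpa only [Set.mem_ofPred_eq, ZMod.natCast_zmod_val, add_sub_cancel] using hc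

lemma add_mem_of_lt_park {O : Finset (ZMod m)} {a : ZMod m} {j : ℕ} (hj : j < park O a) :
    a + (j : ZMod m) ∈ O := by
  simpa using Nat.notMem_of_lt_sInf hj

lemma park_eq_add_park_add {O : Finset (ZMod m)} (hO : O.card < m) {a : ZMod m} {k : ℕ}
    (hlt : ∀ j < k, a + (j : ZMod m) ∈ O) : park O a = k + park O (a + k) := by
  refine park_eq_of_forall (by simpa [add_assoc] using add_park_notMem hO (a + k)) fun j hj => ?_
  rcases lt_or_ge j k with hjk | hkj
  · exact hlt j hjk
  · obtain ⟨i, rfl⟩ := Nat.exists_eq_add_of_le hkj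
    simpa [add_assoc] using add_mem_of_lt_park (by omega : i < park O (a + k))

lemma park_insert_of_ne {O : Finset (ZMod m)} {a x : ZMod m} (hO : O.card < m)
    (hx : x ≠ a + (park O a : ZMod m)) : park (insert x O) a = park O a :=
  park_eq_of_forall (by simpa [Ne.symm hx] using add_park_notMem hO a)
    fun _ hj => mem_insert_of_mem (add_mem_of_lt_park hj)

lemma park_insert_add_park {O : Finset (ZMod m)} (hO : O.card + 2 ≤ m) {a b : ZMod m}
    (hab : b + (park O b : ZMod m) = a + (park O a : ZMod m)) :
    park (insert (a + (park O a : ZMod m)) O) b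
      = park O b + 1 + park (insert (a + (park O a : ZMod m)) O) (a + park O a + 1) := by
  have hcard : (insert (a + (park O a : ZMod m)) O).card < m :=
    (card_insert_le _ _).trans_lt (by omega)
  rw [park_eq_add_park_add hcard (k := park O b + 1) fun j hj => ?_]
  · push_cast
    rw [← add_assoc, hab]
  rcases (Nat.lt_succ_iff_lt_or_eq.mp hj) with hj | rfl
  · exact mem_insert_of_mem (add_mem_of_lt_park hj)
  · exact hab ▸ mem_insert_self _ _

noncomputable def seat (s : Finset (ZMod m) × ℕ) (a : ZMod m) : Finset (ZMod m) × ℕ :=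
  (insert (a + (park s.1 a : ZMod m)) s.1, s.2 + park s.1 a)

lemma seat_seat_comm {O : Finset (ZMod m)} (hO : O.card + 2 ≤ m) (D : ℕ) (a b : ZMod m) :
    seat (seat (O, D) a) b = seat (seat (O, D) b) a := by
  simp only [seat]
  set A := a + (park O a : ZMod m)
  by_cases hab : b + (park O b : ZMod m) = A
  · set p := park (insert A O) (A + 1)
    have hb : park (insert A O) b = park O b + 1 + p := park_insert_add_park hO hab
    have ha : park (insert A O) a = park O a + 1 + p := park_insert_add_park hO rfl
    have hb' : b + ((park O b + 1 + p : ℕ) : ZMod m) = A + 1 + p := by push_cast; rw [← hab]; ring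
    have ha' : a + ((park O a + 1 + p : ℕ) : ZMod m) = A + 1 + p := by push_cast; ring
    rw [hab, hb, ha, hb', ha']
    exact Prod.ext rfl (by simp only; omega)
  · rw [park_insert_of_ne (by omega) (Ne.symm hab), park_insert_of_ne (by omega) hab,
      insert_comm]
    exact Prod.ext rfl (by simp only; omega)

lemma foldl_seat_eq_of_perm {l l' : List (ZMod m)} (hl : l.Perm l') :
    ∀ s : Finset (ZMod m) × ℕ, s.1.card + l.length ≤ m → l.foldl seat s = l'.foldl seat s := by
  induction hl with
  | nil => exact fun _ _ => rfl
  | cons a _ ih =>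
    intro s hs
    exact ih (seat s a) (by
      have := card_insert_le (a + (park s.1 a : ZMod m)) s.1
      simp only [seat, List.length_cons] at hs ⊢
      omega)
  | swap a b l =>
    rintro ⟨O, D⟩ hs
    simp only [List.length_cons] at hs
    simp only [List.foldl_cons, seat_seat_comm (O := O) (D := D) (by omega)]
  | trans h₁₂ _ ih₁₂ ih₂₃ =>
    intro s hs
    exact (ih₁₂ s hs).trans (ih₂₃ s (h₁₂.length_eq ▸ hs))

lemma reject_castSucc {n : ℕ} (f : Fin (n + 1) → ZMod m) (i : Fin n) :
    reject f i.castSucc = reject (Fin.init f) i := by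
  induction i using WellFoundedLT.induction with
  | _ i ih =>
    rw [reject, reject]
    congr 1
    ext j
    simp only [Set.mem_ofPred_eq, Fin.forall_fin_succ', Fin.castSucc_lt_castSucc_iff,
      (Fin.castSucc_lt_last i).not_gt, false_imp_iff, and_true, Fin.init]
    exact forall_congr' fun i' => imp_congr_right fun hi' => by rw [ih i' hi']

lemma reject_last {n : ℕ} (f : Fin (n + 1) → ZMod m) :
    reject f (Fin.last n) =
      park (univ.image fun i => Fin.init f i + (reject (Fin.init f) i : ZMod m))
        (f (Fin.last n)) := by
  rw [reject, park]
  congr 1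
  ext j
  simp [Fin.forall_fin_succ', Fin.castSucc_lt_last, reject_castSucc, eq_comm]
  rfl

lemma foldl_seat_ofFn {n : ℕ} (f : Fin n → ZMod m) :
    (List.ofFn f).foldl seat (∅, 0) =
      (univ.image fun i => f i + reject f i, totalRejections f) := by
  induction n with
  | zero => simp [totalRejections]
  | succ n ih =>
    rw [List.ofFn_succ', List.concat_eq_append, List.foldl_concat, show (fun i : Fin n => f i.castSucc) = Fin.init f from rfl, ih, seat]
    simp only [← reject_last]
    refine Prod.ext ?_ ?_
    · ext c
      simp [Fin.exists_fin_succ', reject_castSucc, eq_comm, or_comm]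
      rfl
    · simp [totalRejections, Fin.sum_univ_castSucc, reject_castSucc]

end MusicalChairs

theorem stmt4_general (n m : ℕ) (h2 : n ≤ m) (f : Fin n → ZMod m)
    (σ : Equiv.Perm (Fin n)) :
    totalRejections (f ∘ σ) = totalRejections f := by
  have h := MusicalChairs.foldl_seat_eq_of_perm (σ.ofFn_comp_perm f) (∅, 0) (by simpa using h2)
  rw [MusicalChairs.foldl_seat_ofFn, MusicalChairs.foldl_seat_ofFn] at h
  exact congrArg Prod.snd h

theorem stmt4 (n m : ℕ) (h1 : 1 ≤ n) (h2 : n ≤ m) (f : Fin n → ZMod m)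
    (σ : Equiv.Perm (Fin n)) :
    totalRejections (f ∘ σ) = totalRejections f :=
  stmt4_general n m h2 f σ
end

section
/- Fix natural numbers n, m, k with 2 ≤ k ≤ n ≤ m. Then twice the number of k-patterns equals m · n!/(n-k)!; that is, 2 · |{P : Fin n → Option (ZMod m) | P is a k-pattern}| = m · n!/(n-k)!. -/
/-!
Encode the players of a `k`-pattern with doubled chair `c` by slots `Fin 2 ⊕ Fin (k - 2)`: two
slots sit on `c` and slot `j` sits on `c + j + 1`. A pattern is then the same as an embedding
`f` of the slots into the players, pushed forward to an assignment, and a partial assignment is a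
pattern exactly when its chair fibres have the sizes of the slot fibres. As `k ≤ m`, the chairs
`c, …, c + k - 2` are distinct, so the pattern determines `c`, and determines `f` up to
exchanging the two players on `c`. Hence `(c, f) ↦ pattern` is two-to-one from
`ZMod m × (Fin 2 ⊕ Fin (k - 2) ↪ Fin n)`, a set of `m · n!/(n-k)!` elements.
-/

/-- A partial assignment `P : Fin n → Option (ZMod m)` is a `k`-pattern when there is
a chair `c` such that exactly two players are assigned chair `c`, for each
`1 ≤ j ≤ k - 2` exactly one player is assigned chair `c + j`, and no player is
assigned any other chair. -/
def IsPattern {n m : ℕ} (k : ℕ) (P : Fin n → Option (ZMod m)) : Prop :=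
  ∃ c : ZMod m,
    Nat.card {i : Fin n // P i = some c} = 2 ∧
    (∀ j : ℕ, 1 ≤ j → j ≤ k - 2 →
      Nat.card {i : Fin n // P i = some (c + (j : ZMod m))} = 1) ∧
    (∀ i : Fin n, ∀ c' : ZMod m, P i = some c' →
      ∃ j : ℕ, j ≤ k - 2 ∧ c' = c + (j : ZMod m))

open Function

theorem Nat.card_eq_card_mul_of_forall_card_fiber_eq {α β : Type*} [Finite α] [Finite β]
    (f : α → β) {d : ℕ} (hf : ∀ b, Nat.card {a // f a = b} = d) :
    Nat.card α = Nat.card β * d := by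
  have := Fintype.ofFinite β
  rw [← Nat.card_congr (Equiv.sigmaFiberEquiv f), Nat.card_sigma]
  simp [hf, Nat.card_eq_fintype_card]

theorem ZMod.natCast_eq_natCast_iff_of_lt {m a b : ℕ} (ha : a < m) (hb : b < m) :
    (a : ZMod m) = b ↔ a = b := by
  rw [ZMod.natCast_eq_natCast_iff', Nat.mod_eq_of_lt ha, Nat.mod_eq_of_lt hb]

section ExtendSome

variable {α β γ : Type*}

theorem extend_some_eq_some_iff (f : α ↪ β) (g : α → γ) {i : β} {d : γ} :
    extend f (some ∘ g) (fun _ => none) i = some d ↔ ∃ a, g a = d ∧ f a = i := by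
  by_cases hi : ∃ a, f a = i
  · obtain ⟨a, rfl⟩ := hi
    simp [f.injective.extend_apply, f.injective.eq_iff]
  · rw [extend_apply' _ _ _ hi]
    simp only [reduceCtorEq, false_iff, not_exists, not_and]
    exact fun a _ ha => hi ⟨a, ha⟩

theorem card_extend_some_eq_some (f : α ↪ β) (g : α → γ) (d : γ) :
    Nat.card {i // extend f (some ∘ g) (fun _ => none) i = some d} = Nat.card {a // g a = d} :=
  (Nat.card_congr (Equiv.subtypeEquivRight fun _ => extend_some_eq_some_iff f g)).trans
    (Nat.card_image_of_injective f.injective {a | g a = d})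

theorem extend_some_trans_equiv (f : α ↪ β) (g : α → γ) (e : α ≃ α) (he : g ∘ e = g) :
    extend (e.toEmbedding.trans f) (some ∘ g) (fun _ => none) =
      extend f (some ∘ g) (fun _ => none) := by
  funext i
  refine Option.ext fun d => ?_
  simp only [extend_some_eq_some_iff]
  refine e.exists_congr fun a => ?_
  rw [← congrFun he a]
  rfl

theorem exists_embedding_extend_some_eq [Finite α] [Finite β] (g : α → γ) (P : β → Option γ)
    (h : ∀ d, Nat.card {i // P i = some d} = Nat.card {a // g a = d}) :
    ∃ f : α ↪ β, extend f (some ∘ g) (fun _ => none) = P := by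
  have e d : {a // g a = d} ≃ {i // P i = some d} := (Finite.card_eq.1 (h d).symm).some
  let F : (Σ d, {a // g a = d}) ↪ β :=
    ⟨fun x => e x.1 x.2, by
      rintro ⟨d, x⟩ ⟨d', y⟩ (hxy : (e d x : β) = e d' y)
      obtain rfl : d = d' := Option.some_injective _ (by rw [← (e d x).2, ← (e d' y).2, hxy])
      rw [(e d).injective (Subtype.ext hxy)]⟩
  refine ⟨(Equiv.sigmaFiberEquiv g).symm.toEmbedding.trans F,
    funext fun i => Option.ext fun d => ?_⟩
  rw [extend_some_eq_some_iff]
  constructor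
  · rintro ⟨a, rfl, rfl⟩
    exact (e (g a) ⟨a, rfl⟩).2
  · intro hi
    set x := (e d).symm ⟨i, hi⟩
    have hx : (Equiv.sigmaFiberEquiv g).symm x.1 = ⟨d, x⟩ := (Equiv.symm_apply_eq _).2 rfl
    refine ⟨x.1, x.2, ?_⟩
    change F ((Equiv.sigmaFiberEquiv g).symm x.1) = i
    rw [hx]
    exact congrArg Subtype.val ((e d).apply_symm_apply ⟨i, hi⟩)

end ExtendSome

section Seating

variable {n m l : ℕ}

def slotOffset : Fin 2 ⊕ Fin l → ℕ := Sum.elim (fun _ => 0) (fun j => j + 1)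

def slotChair (c : ZMod m) (a : Fin 2 ⊕ Fin l) : ZMod m := c + (slotOffset a : ℕ)

noncomputable def seating (c : ZMod m) (f : Fin 2 ⊕ Fin l ↪ Fin n) : Fin n → Option (ZMod m) :=
  extend f (some ∘ slotChair c) (fun _ => none)

theorem seating_apply (c : ZMod m) (f : Fin 2 ⊕ Fin l ↪ Fin n) (a : Fin 2 ⊕ Fin l) :
    seating c f (f a) = some (slotChair c a) :=
  f.injective.extend_apply _ _ a

def swapShared (f : Fin 2 ⊕ Fin l ↪ Fin n) : Fin 2 ⊕ Fin l ↪ Fin n :=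
  (Equiv.swap (.inl 0) (.inl 1)).toEmbedding.trans f

theorem slotOffset_le (a : Fin 2 ⊕ Fin l) : slotOffset a ≤ l := by
  rcases a with _ | j
  · exact Nat.zero_le l
  · exact j.isLt

theorem card_slotOffset_eq_zero : Nat.card {a : Fin 2 ⊕ Fin l // slotOffset a = 0} = 2 := by
  rw [Nat.card_eq_two_iff]
  refine ⟨⟨.inl 0, rfl⟩, ⟨.inl 1, rfl⟩, by simp [Subtype.ext_iff], ?_⟩
  ext ⟨i | j, h⟩
  · fin_cases i <;> simp
  · simp [slotOffset] at h

theorem card_slotOffset_eq_of_pos {j : ℕ} (h1 : 1 ≤ j) (h2 : j ≤ l) :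
    Nat.card {a : Fin 2 ⊕ Fin l // slotOffset a = j} = 1 := by
  rw [Nat.card_eq_one_iff_exists]
  refine ⟨⟨.inr ⟨j - 1, by omega⟩, by simp [slotOffset]; omega⟩, ?_⟩
  rintro ⟨i | i, h⟩ <;> simp [slotOffset, Subtype.ext_iff, Fin.ext_iff] at h ⊢ <;> omega

theorem slotChair_eq_add_iff (hl : l < m) {c : ZMod m} {a : Fin 2 ⊕ Fin l} {j : ℕ} (hj : j ≤ l) :
    slotChair c a = c + j ↔ slotOffset a = j := by
  rw [slotChair, add_right_inj,
    ZMod.natCast_eq_natCast_iff_of_lt ((slotOffset_le a).trans_lt hl) (hj.trans_lt hl)]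

theorem card_slotChair_eq_add (hl : l < m) (c : ZMod m) {j : ℕ} (hj : j ≤ l) :
    Nat.card {a : Fin 2 ⊕ Fin l // slotChair c a = c + j} =
      Nat.card {a : Fin 2 ⊕ Fin l // slotOffset a = j} :=
  Nat.card_congr (Equiv.subtypeEquivRight fun _ => slotChair_eq_add_iff hl hj)

theorem slotChair_inl (c : ZMod m) (i : Fin 2) : slotChair c (.inl i : Fin 2 ⊕ Fin l) = c := by
  simp [slotChair, slotOffset]

theorem slotChair_inr_ne (hl : l < m) (c : ZMod m) (j : Fin l) : slotChair c (.inr j) ≠ c := by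
  simpa [slotOffset] using (slotChair_eq_add_iff hl (a := .inr j) (Nat.zero_le l)).not.2

theorem eq_of_slotChair_eq_of_ne (hl : l < m) {c : ZMod m} {a b : Fin 2 ⊕ Fin l}
    (hab : slotChair c a = slotChair c b) (ha : slotChair c a ≠ c) : a = b := by
  rcases a with i | i
  · exact absurd (slotChair_inl c i) ha
  rcases b with j | j
  · exact absurd (hab.trans (slotChair_inl c j)) ha
  have hij := (slotChair_eq_add_iff hl (j := slotOffset (.inr j)) (slotOffset_le _)).1 hab
  simp only [slotOffset, Sum.elim_inr, add_left_inj, Fin.val_inj] at hij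
  rw [hij]

theorem isPattern_iff_card_fiber (hl : l < m) {P : Fin n → Option (ZMod m)} :
    IsPattern (l + 2) P ↔
      ∃ c, ∀ d, Nat.card {i // P i = some d} =
        Nat.card {a : Fin 2 ⊕ Fin l // slotChair c a = d} := by
  simp only [IsPattern, Nat.add_sub_cancel]
  constructor
  · rintro ⟨c, h2, h1, h3⟩
    refine ⟨c, fun d => ?_⟩
    by_cases hd : ∃ j ≤ l, d = c + j
    · obtain ⟨j, hj, rfl⟩ := hd
      rw [card_slotChair_eq_add hl c hj]
      rcases Nat.eq_zero_or_pos j with rfl | hj0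
      · rwa [card_slotOffset_eq_zero, Nat.cast_zero, add_zero]
      · rw [h1 j hj0 hj, card_slotOffset_eq_of_pos hj0 hj]
    · simp only [not_exists, not_and] at hd
      have : IsEmpty {i // P i = some d} := ⟨fun ⟨i, hi⟩ => by
        obtain ⟨j, hj, rfl⟩ := h3 i d hi
        exact hd j hj rfl⟩
      have : IsEmpty {a // slotChair c a = d} := ⟨fun ⟨a, ha⟩ => hd _ (slotOffset_le a) ha.symm⟩
      simp only [Nat.card_of_isEmpty]
  · rintro ⟨c, hc⟩
    refine ⟨c, ?_, fun j hj1 hj => ?_, fun i d hi => ?_⟩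
    · have h0 := card_slotChair_eq_add hl c (Nat.zero_le l)
      rw [Nat.cast_zero, add_zero, card_slotOffset_eq_zero] at h0
      exact (hc c).trans h0
    · rw [hc, card_slotChair_eq_add hl c hj, card_slotOffset_eq_of_pos hj1 hj]
    · have hpos : 0 < Nat.card {a : Fin 2 ⊕ Fin l // slotChair c a = d} := by
        rw [← hc]
        exact Finite.card_pos_iff.2 ⟨⟨i, hi⟩⟩
      obtain ⟨a, rfl⟩ := Finite.card_pos_iff.1 hpos
      exact ⟨slotOffset a, slotOffset_le a, rfl⟩

theorem isPattern_seating (hl : l < m) (c : ZMod m) (f : Fin 2 ⊕ Fin l ↪ Fin n) :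
    IsPattern (l + 2) (seating c f) :=
  (isPattern_iff_card_fiber hl).2 ⟨c, card_extend_some_eq_some f _⟩

theorem exists_seating_eq (hl : l < m) {P : Fin n → Option (ZMod m)} (hP : IsPattern (l + 2) P) :
    ∃ c, ∃ f : Fin 2 ⊕ Fin l ↪ Fin n, seating c f = P :=
  let ⟨c, hc⟩ := (isPattern_iff_card_fiber hl).1 hP
  ⟨c, exists_embedding_extend_some_eq _ P hc⟩

theorem seating_swapShared (c : ZMod m) (f : Fin 2 ⊕ Fin l ↪ Fin n) :
    seating c (swapShared f) = seating c f := by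
  refine extend_some_trans_equiv f _ _ (funext fun a => ?_)
  rcases a with i | j
  · fin_cases i <;> simp [slotChair_inl]
  · simp [Equiv.swap_apply_of_ne_of_ne]

theorem swapShared_ne (f : Fin 2 ⊕ Fin l ↪ Fin n) : swapShared f ≠ f := fun h => by
  have := f.injective (DFunLike.congr_fun h (.inl 0))
  simp at this

theorem exists_slotChair_eq_of_seating_eq {c c' : ZMod m} {f f' : Fin 2 ⊕ Fin l ↪ Fin n}
    (h : seating c' f' = seating c f) (a : Fin 2 ⊕ Fin l) :
    ∃ b, slotChair c b = slotChair c' a ∧ f b = f' a :=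
  (extend_some_eq_some_iff f _).1 (h ▸ seating_apply c' f' a :)

theorem eq_of_seating_eq_seating (hl : l < m) {c c' : ZMod m} {f f' : Fin 2 ⊕ Fin l ↪ Fin n}
    (h : seating c' f' = seating c f) : c' = c := by
  obtain ⟨b₀, hb₀, hfb₀⟩ := exists_slotChair_eq_of_seating_eq h (.inl 0)
  obtain ⟨b₁, hb₁, hfb₁⟩ := exists_slotChair_eq_of_seating_eq h (.inl 1)
  rw [slotChair_inl] at hb₀ hb₁
  by_contra hne
  have hb : b₀ = b₁ := eq_of_slotChair_eq_of_ne hl (hb₀.trans hb₁.symm) (hb₀ ▸ hne)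
  have := f'.injective (hfb₀.symm.trans (hb ▸ hfb₁))
  simp at this

theorem eq_or_eq_swapShared_of_seating_eq (hl : l < m) {c : ZMod m}
    {f f' : Fin 2 ⊕ Fin l ↪ Fin n} (h : seating c f' = seating c f) :
    f' = f ∨ f' = swapShared f := by
  have hinl {b : Fin 2 ⊕ Fin l} (hb : slotChair c b = c) : ∃ i, b = .inl i := by
    rcases b with i | j
    · exact ⟨i, rfl⟩
    · exact absurd hb (slotChair_inr_ne hl c j)
  have hinr (j : Fin l) : f' (.inr j) = f (.inr j) := by
    obtain ⟨b, hb, hfb⟩ := exists_slotChair_eq_of_seating_eq h (.inr j)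
    rw [← hfb, eq_of_slotChair_eq_of_ne hl hb (hb ▸ slotChair_inr_ne hl c j)]
  obtain ⟨b₀, hb₀, hfb₀⟩ := exists_slotChair_eq_of_seating_eq h (.inl 0)
  obtain ⟨b₁, hb₁, hfb₁⟩ := exists_slotChair_eq_of_seating_eq h (.inl 1)
  obtain ⟨i₀, rfl⟩ := hinl (hb₀.trans (slotChair_inl c 0))
  obtain ⟨i₁, rfl⟩ := hinl (hb₁.trans (slotChair_inl c 1))
  fin_cases i₀ <;> fin_cases i₁
  · exact absurd (f'.injective (hfb₀.symm.trans hfb₁)) (by simp)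
  · refine .inl (Function.Embedding.ext fun a => ?_)
    rcases a with i | j
    · fin_cases i
      · exact hfb₀.symm
      · exact hfb₁.symm
    · exact hinr j
  · refine .inr (Function.Embedding.ext fun a => ?_)
    rcases a with i | j
    · fin_cases i
      · simpa [swapShared] using hfb₀.symm
      · simpa [swapShared] using hfb₁.symm
    · simp [swapShared, Equiv.swap_apply_of_ne_of_ne, hinr]
  · exact absurd (f'.injective (hfb₀.symm.trans hfb₁)) (by simp)

theorem seating_eq_seating_iff (hl : l < m) {c c' : ZMod m} {f f' : Fin 2 ⊕ Fin l ↪ Fin n} :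
    seating c' f' = seating c f ↔ c' = c ∧ (f' = f ∨ f' = swapShared f) := by
  constructor
  · intro h
    obtain rfl := eq_of_seating_eq_seating hl h
    exact ⟨rfl, eq_or_eq_swapShared_of_seating_eq hl h⟩
  · rintro ⟨rfl, rfl | rfl⟩
    · rfl
    · exact seating_swapShared c' f

noncomputable def seatingPattern (hl : l < m) (x : ZMod m × (Fin 2 ⊕ Fin l ↪ Fin n)) :
    {P : Fin n → Option (ZMod m) // IsPattern (l + 2) P} :=
  ⟨seating x.1 x.2, isPattern_seating hl x.1 x.2⟩

theorem card_fiber_seatingPattern (hl : l < m)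
    (P : {P : Fin n → Option (ZMod m) // IsPattern (l + 2) P}) :
    Nat.card {x // seatingPattern hl x = P} = 2 := by
  obtain ⟨P, hP⟩ := P
  obtain ⟨c, f, rfl⟩ := exists_seating_eq hl hP
  rw [Nat.card_eq_two_iff]
  refine ⟨⟨(c, f), rfl⟩, ⟨(c, swapShared f), Subtype.ext (seating_swapShared c f)⟩,
    fun h => swapShared_ne f (congrArg (fun x => x.1.2) h).symm, Set.eq_univ_of_forall ?_⟩
  rintro ⟨⟨c', f'⟩, hx⟩
  obtain ⟨rfl, rfl | rfl⟩ := (seating_eq_seating_iff hl).1 (congrArg Subtype.val hx)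
  · exact .inl rfl
  · exact .inr rfl

end Seating

theorem stmt6 (n m k : ℕ) (hk : 2 ≤ k) (hkn : k ≤ n) (hnm : n ≤ m) :
    2 * Nat.card {P : Fin n → Option (ZMod m) // IsPattern k P} =
      m * n.descFactorial k := by
  obtain ⟨l, rfl⟩ : ∃ l, k = l + 2 := ⟨k - 2, by omega⟩
  have hl : l < m := by omega
  have : NeZero m := ⟨by omega⟩
  have hcount :=
    Nat.card_eq_card_mul_of_forall_card_fiber_eq _ (card_fiber_seatingPattern (n := n) hl)
  rw [Nat.card_prod, Nat.card_zmod, Nat.card_eq_fintype_card (α := _ ↪ _),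
    Fintype.card_embedding_eq] at hcount
  simp only [Fintype.card_sum, Fintype.card_fin, add_comm 2 l] at hcount
  rw [hcount, mul_comm]
end

section
/- Fix natural numbers n, m, k with 2 ≤ k ≤ n ≤ m. Then twice the number of matches between samples and k-patterns equals (n!/(n-k)!) · m^(n-k+1); that is, 2 · |{(f, P) : f is a sample, P is a k-pattern, and f matches P}| = (n!/(n-k)!) · m^(n-k+1). -/
/-- A sample `f` matches a partial assignment `P` when `f i = c'`
whenever `P i = some c'`. -/
def Matches {n m : ℕ} (f : Fin n → ZMod m) (P : Fin n → Option (ZMod m)) : Prop :=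
  ∀ i : Fin n, ∀ c' : ZMod m, P i = some c' → f i = c'

/-!
A matched pair `(f, P)` is produced by choosing the chair `c` of the doubly occupied seat, an
ordering `e : Fin k ↪ Fin n` of the seated players (`e 0` and `e 1` on chair `c`, `e j` on
chair `c + (j - 1)`), and the values of `f` at the `n - k` unseated players:
`n!/(n-k)! · m · m^(n-k)` choices. Since `k ≤ m`, the chairs `c, …, c + k - 2` are distinct, so
each pattern arises from exactly two pairs `(e, c)`, which differ only in the order of the two
players on chair `c`.
-/

open Finset

lemma eq_of_natCard_subtype_eq_one {α : Type*} {p : α → Prop} (h : Nat.card {x // p x} = 1)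
    {x y : α} (hx : p x) (hy : p y) : x = y :=
  congrArg Subtype.val ((Nat.card_eq_one_iff_unique.1 h).1.elim ⟨x, hx⟩ ⟨y, hy⟩)

lemma natCard_subtype_prod_eq_sum {α β : Type*} [Finite α] [Fintype β] (Q : β → Prop)
    [DecidablePred Q] (R : α → β → Prop) :
    Nat.card {x : α × β // Q x.2 ∧ R x.1 x.2} = ∑ b with Q b, Nat.card {a // R a b} := by
  let E : {x : α × β // Q x.2 ∧ R x.1 x.2} ≃ Σ b : {b // Q b}, {a // R a b} :=
    { toFun x := ⟨⟨x.1.2, x.2.1⟩, ⟨x.1.1, x.2.2⟩⟩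
      invFun y := ⟨(y.2.1, y.1.1), y.1.2, y.2.2⟩
      left_inv _ := rfl
      right_inv _ := rfl }
  rw [Nat.card_congr E, Nat.card_sigma]
  exact (sum_subtype {b | Q b} (fun _ => by simp) fun b => Nat.card {a // R a b}).symm

namespace ChairPattern

variable {n m k : ℕ}

/-- Position `j` of a pattern goes to chair `c + (j - 1)`; the truncated subtraction puts
positions `0` and `1` both on chair `c`. -/
def seat (c : ZMod m) (j : Fin k) : ZMod m := c + ((j - 1 : ℕ) : ZMod m)

lemma seat_of_lt_two (c : ZMod m) {j : Fin k} (hj : (j : ℕ) < 2) : seat c j = c := by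
  simp [seat, Nat.sub_eq_zero_of_le (Nat.le_of_lt_succ hj)]

lemma seat_eq_add_iff (hkm : k ≤ m) {c : ZMod m} {j : Fin k} {t : ℕ} (ht : t < m) :
    seat c j = c + t ↔ (j : ℕ) - 1 = t := by
  rw [seat, add_right_inj, ZMod.natCast_eq_natCast_iff', Nat.mod_eq_of_lt (by omega),
    Nat.mod_eq_of_lt ht]

lemma sub_one_eq_of_seat_eq (hkm : k ≤ m) {c : ZMod m} {j j' : Fin k}
    (h : seat c j = seat c j') : (j : ℕ) - 1 = (j' : ℕ) - 1 :=
  (seat_eq_add_iff hkm (by omega)).1 h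

noncomputable def patternOf (e : Fin k ↪ Fin n) (c : ZMod m) : Fin n → Option (ZMod m) :=
  Function.extend e (fun j => some (seat c j)) fun _ => none

lemma patternOf_apply (e : Fin k ↪ Fin n) (c : ZMod m) (j : Fin k) :
    patternOf e c (e j) = some (seat c j) :=
  e.injective.extend_apply _ _ j

lemma patternOf_eq_some_iff {e : Fin k ↪ Fin n} {c d : ZMod m} {i : Fin n} :
    patternOf e c i = some d ↔ ∃ j, e j = i ∧ seat c j = d := by
  by_cases hi : ∃ j, e j = i
  · obtain ⟨j, rfl⟩ := hi
    simp [patternOf_apply, e.injective.eq_iff]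
  · simp only [not_exists] at hi
    simp [patternOf, hi]

lemma patternOf_eq_none_iff {e : Fin k ↪ Fin n} {c : ZMod m} {i : Fin n} :
    patternOf e c i = none ↔ i ∉ Set.range e := by
  rw [Option.eq_none_iff_forall_ne_some]
  simp [patternOf_eq_some_iff]

lemma isPattern_patternOf (hk : 2 ≤ k) (hkm : k ≤ m) (e : Fin k ↪ Fin n) (c : ZMod m) :
    IsPattern k (patternOf e c) := by
  have hfiber : ∀ t < m, Nat.card {i // patternOf e c i = some (c + t)} =
      ({j : Fin k | (j : ℕ) - 1 = t} : Set (Fin k)).ncard := by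
    intro t ht
    have : {i | patternOf e c i = some (c + t)} = e '' {j | (j : ℕ) - 1 = t} := by
      ext i
      simp [patternOf_eq_some_iff, seat_eq_add_iff hkm ht, and_comm]
    exact (congrArg Set.ncard this).trans (Set.ncard_image_of_injective _ e.injective)
  refine ⟨c, ?_, fun t ht1 htk => ?_, fun i d hd => ?_⟩
  · have h01 : {j : Fin k | (j : ℕ) - 1 = 0} = {⟨0, by omega⟩, ⟨1, by omega⟩} := by
      ext j
      simp [Fin.ext_iff]
      omega
    simpa [h01, Set.ncard_pair, Fin.ext_iff] using hfiber 0 (by omega)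
  · have ht : {j : Fin k | (j : ℕ) - 1 = t} = {⟨t + 1, by omega⟩} := by
      ext j
      simp only [Set.mem_ofPred_eq, Set.mem_singleton_iff, Fin.ext_iff]
      omega
    rw [hfiber t (by omega), ht, Set.ncard_singleton]
  · obtain ⟨j, -, rfl⟩ := patternOf_eq_some_iff.1 hd
    exact ⟨j - 1, by omega, rfl⟩

lemma patternOf_eq {e : Fin k ↪ Fin n} {c : ZMod m} {P : Fin n → Option (ZMod m)}
    (hseat : ∀ j, P (e j) = some (seat c j)) (hrange : ∀ i, P i ≠ none → i ∈ Set.range e) :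
    patternOf e c = P := by
  funext i
  by_cases hi : i ∈ Set.range e
  · obtain ⟨j, rfl⟩ := hi
    rw [patternOf_apply, hseat]
  · rw [patternOf_eq_none_iff.2 hi]
    exact (not_not.1 (mt (hrange i) hi)).symm

lemma card_matches [NeZero m] (P : Fin n → Option (ZMod m)) :
    Nat.card {f : Fin n → ZMod m // Matches f P} = m ^ #{i | P i = none} := by
  rw [show Nat.card {f // Matches f P} =
      Nat.card (∀ i, {x : ZMod m // ∀ d, P i = some d → x = d}) from
    Nat.card_congr (Equiv.subtypePiEquivPi (p := fun i x => ∀ d, P i = some d → x = d)),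
    Nat.card_pi]
  have hfactor : ∀ i, Nat.card {x : ZMod m // ∀ d, P i = some d → x = d} =
      if P i = none then m else 1 := by
    intro i
    cases P i <;> simp
  rw [prod_congr rfl fun i _ => hfactor i, prod_ite, prod_const, prod_const_one, mul_one]

lemma card_matches_patternOf [NeZero m] (e : Fin k ↪ Fin n) (c : ZMod m) :
    Nat.card {f : Fin n → ZMod m // Matches f (patternOf e c)} = m ^ (n - k) := by
  have hnone : ({i | patternOf e c i = none} : Finset (Fin n)) = (univ.map e)ᶜ := by
    ext i
    simp [patternOf_eq_none_iff]
  rw [card_matches, hnone, card_compl, card_map, card_univ, Fintype.card_fin, Fintype.card_fin]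

section Fiber

variable {P : Fin n → Option (ZMod m)} {c : ZMod m}

lemma center_eq_of_patternOf_eq (hk : 2 ≤ k)
    (hsingle : ∀ j : ℕ, 1 ≤ j → j ≤ k - 2 → Nat.card {i // P i = some (c + j)} = 1)
    (hcover : ∀ i d, P i = some d → ∃ j ≤ k - 2, d = c + j)
    {e : Fin k ↪ Fin n} {c' : ZMod m} (he : patternOf e c' = P) : c' = c := by
  subst he
  have hseat : ∀ j : Fin k, (j : ℕ) < 2 → patternOf e c' (e j) = some c' := fun j hj => by
    rw [patternOf_apply, seat_of_lt_two c' hj]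
  obtain ⟨t, htk, rfl⟩ := hcover _ _ (hseat ⟨0, by omega⟩ (by simp))
  rcases Nat.eq_zero_or_pos t with rfl | ht
  · simp
  · have h01 := eq_of_natCard_subtype_eq_one (hsingle t ht htk)
      (hseat ⟨0, by omega⟩ (by simp)) (hseat ⟨1, by omega⟩ (by simp))
    exact absurd (e.injective h01) (by simp [Fin.ext_iff])

lemma embedding_eq_of_patternOf_eq
    (hsingle : ∀ j : ℕ, 1 ≤ j → j ≤ k - 2 → Nat.card {i // P i = some (c + j)} = 1)
    {e e' : Fin k ↪ Fin n} (he : patternOf e c = P) (he' : patternOf e' c = P)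
    (h01 : ∀ j : Fin k, (j : ℕ) < 2 → e j = e' j) : e = e' := by
  refine DFunLike.ext _ _ fun j => ?_
  rcases lt_or_ge (j : ℕ) 2 with hj | hj
  · rw [h01 j hj]
  · have h := patternOf_apply e c j
    have h' := patternOf_apply e' c j
    rw [he] at h
    rw [he'] at h'
    exact eq_of_natCard_subtype_eq_one (hsingle (j - 1) (by omega) (by omega)) h h'

lemma exists_patternOf_eq (hk : 2 ≤ k) (hkm : k ≤ m) {a b : Fin n}
    (ha : P a = some c) (hb : P b = some c) (hab : a ≠ b)
    (hpair : ∀ i, P i = some c → i = a ∨ i = b)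
    (hsingle : ∀ j : ℕ, 1 ≤ j → j ≤ k - 2 → Nat.card {i // P i = some (c + j)} = 1)
    (hcover : ∀ i d, P i = some d → ∃ j ≤ k - 2, d = c + j) :
    ∃ e : Fin k ↪ Fin n, e ⟨0, by omega⟩ = a ∧ e ⟨1, by omega⟩ = b ∧ patternOf e c = P := by
  have hw : ∀ t : ℕ, ∃ i, 1 ≤ t → t ≤ k - 2 → P i = some (c + t) := by
    intro t
    by_cases ht : 1 ≤ t ∧ t ≤ k - 2
    · obtain ⟨⟨i, hi⟩⟩ := (Nat.card_eq_one_iff_unique.1 (hsingle t ht.1 ht.2)).2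
      exact ⟨i, fun _ _ => hi⟩
    · exact ⟨a, fun h1 h2 => absurd ⟨h1, h2⟩ ht⟩
  choose w hw using hw
  let g : Fin k → Fin n := fun j => if (j : ℕ) = 0 then a else if (j : ℕ) = 1 then b else w (j - 1)
  have hg : ∀ j, P (g j) = some (seat c j) := by
    intro j
    by_cases h0 : (j : ℕ) = 0
    · simp [g, h0, seat, ha]
    by_cases h1 : (j : ℕ) = 1
    · simp [g, h1, seat, hb]
    · simp only [g, if_neg h0, if_neg h1]
      exact hw _ (by omega) (by omega)
  have g_inj : Function.Injective g := by
    intro j j' h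
    have hsub := sub_one_eq_of_seat_eq hkm (Option.some.inj ((hg j).symm.trans (h ▸ hg j')))
    by_contra hne
    have hne' : (j : ℕ) ≠ j' := Fin.val_ne_of_ne hne
    rcases (by omega : ((j : ℕ) = 0 ∧ (j' : ℕ) = 1) ∨ ((j : ℕ) = 1 ∧ (j' : ℕ) = 0))
      with ⟨h0, h1⟩ | ⟨h1, h0⟩
    · simp only [g, h0, h1, ↓reduceIte, one_ne_zero] at h
      exact hab h
    · simp only [g, h0, h1, ↓reduceIte, one_ne_zero] at h
      exact hab h.symm
  refine ⟨⟨g, g_inj⟩, by simp [g], by simp [g], patternOf_eq hg fun i hi => ?_⟩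
  obtain ⟨d, hd⟩ := Option.ne_none_iff_exists'.1 hi
  obtain ⟨t, htk, rfl⟩ := hcover i d hd
  rcases Nat.eq_zero_or_pos t with rfl | ht
  · rcases hpair i (by simpa using hd) with rfl | rfl
    · exact ⟨⟨0, by omega⟩, by simp [g]⟩
    · exact ⟨⟨1, by omega⟩, by simp [g]⟩
  · have hi : i = w t := eq_of_natCard_subtype_eq_one (hsingle t ht htk) hd (hw t ht htk)
    exact ⟨⟨t + 1, by omega⟩, by simp [g, hi, ht.ne']⟩

lemma card_filter_patternOf_eq [NeZero m] (hk : 2 ≤ k) (hkm : k ≤ m) (hP : IsPattern k P) :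
    #{x : (Fin k ↪ Fin n) × ZMod m | patternOf x.1 x.2 = P} = 2 := by
  obtain ⟨c, hpair, hsingle, hcover⟩ := hP
  set s : Finset (Fin n) := {i | P i = some c}
  have hs : #s = 2 := by rw [← hpair, Nat.card_eq_fintype_card, Fintype.card_subtype]
  have hcenter : ∀ {e : Fin k ↪ Fin n} {c'}, patternOf e c' = P → c' = c :=
    center_eq_of_patternOf_eq hk hsingle hcover
  have hseat : ∀ {e : Fin k ↪ Fin n}, patternOf e c = P → ∀ j : Fin k, (j : ℕ) < 2 →
      P (e j) = some c := fun he j hj => by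
    rw [← he, patternOf_apply, seat_of_lt_two c hj]
  -- a preimage of `P` is determined by the ordered pair of players sharing chair `c`
  let π (x : (Fin k ↪ Fin n) × ZMod m) : Fin n × Fin n := (x.1 ⟨0, by omega⟩, x.1 ⟨1, by omega⟩)
  set F : Finset ((Fin k ↪ Fin n) × ZMod m) := {x | patternOf x.1 x.2 = P}
  have himage : image π F = s.offDiag := by
    ext ⟨a, b⟩
    simp only [mem_image, mem_filter, mem_univ, true_and, mem_offDiag, F, s, π, Prod.mk.injEq]
    constructor
    · rintro ⟨⟨e, c'⟩, he, rfl, rfl⟩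
      obtain rfl := hcenter he
      exact ⟨hseat he _ (by simp), hseat he _ (by simp),
        fun h => absurd (e.injective h) (by simp [Fin.ext_iff])⟩
    · rintro ⟨ha, hb, hab⟩
      have hpair' : ({a, b} : Finset (Fin n)) = s :=
        eq_of_subset_of_card_le (by simp [insert_subset_iff, s, ha, hb])
          (by rw [hs, card_pair hab])
      obtain ⟨e, he0, he1, he⟩ := exists_patternOf_eq hk hkm ha hb hab
        (fun i hi => by simpa [s] using hpair'.ge (by simpa [s] using hi)) hsingle hcover
      exact ⟨(e, c), he, he0, he1⟩
  have hinj : Set.InjOn π F := by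
    rintro ⟨e, c₁⟩ he ⟨e', c₂⟩ he' h
    simp only [F, coe_filter, mem_univ, true_and, Set.mem_ofPred_eq] at he he'
    obtain rfl := hcenter he
    obtain rfl := hcenter he'
    simp only [π, Prod.mk.injEq] at h
    refine Prod.ext (embedding_eq_of_patternOf_eq hsingle he he' fun j hj => ?_) rfl
    rcases (by omega : (j : ℕ) = 0 ∨ (j : ℕ) = 1) with hj | hj
    · rw [show j = ⟨0, by omega⟩ from Fin.ext hj, h.1]
    · rw [show j = ⟨1, by omega⟩ from Fin.ext hj, h.2]
  rw [← card_image_of_injOn hinj, himage, offDiag_card, hs]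

end Fiber

end ChairPattern

open ChairPattern

theorem stmt7 (n m k : ℕ) (hk : 2 ≤ k) (hkn : k ≤ n) (hnm : n ≤ m) :
    2 * Nat.card {fP : (Fin n → ZMod m) × (Fin n → Option (ZMod m)) //
        IsPattern k fP.2 ∧ Matches fP.1 fP.2} =
      n.descFactorial k * m ^ (n - k + 1) := by
  classical
  have hkm : k ≤ m := hkn.trans hnm
  have : NeZero m := ⟨by omega⟩
  let M (P : Fin n → Option (ZMod m)) : ℕ := Nat.card {f : Fin n → ZMod m // Matches f P}
  let φ (x : (Fin k ↪ Fin n) × ZMod m) : Fin n → Option (ZMod m) := patternOf x.1 x.2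
  calc 2 * Nat.card _ = ∑ P with IsPattern k P, #{x | φ x = P} * M P := by
        rw [natCard_subtype_prod_eq_sum, mul_sum]
        exact sum_congr rfl fun P hP => by
          rw [card_filter_patternOf_eq hk hkm (mem_filter.1 hP).2]
    _ = ∑ x, M (φ x) := by
        rw [← sum_fiberwise_of_maps_to (g := φ) fun x _ => mem_filter.2
          ⟨mem_univ _, isPattern_patternOf hk hkm x.1 x.2⟩]
        refine sum_congr rfl fun P _ => ?_
        rw [sum_congr rfl fun x hx => by rw [(mem_filter.1 hx).2], sum_const, smul_eq_mul]
    _ = ∑ _x : (Fin k ↪ Fin n) × ZMod m, m ^ (n - k) :=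
        sum_congr rfl fun x _ => card_matches_patternOf x.1 x.2
    _ = n.descFactorial k * m ^ (n - k + 1) := by
        rw [sum_const, card_univ, Fintype.card_prod, Fintype.card_embedding_eq, Fintype.card_fin,
          Fintype.card_fin, ZMod.card, smul_eq_mul, pow_succ]
        ring
end

section
/- Fix natural numbers n and m with 2 ≤ n ≤ m. Then twice the total number of matches between samples and k-patterns, over all k with 2 ≤ k ≤ n, equals ∑_{k=2}^{n} (n!/(n-k)!) · m^(n-k+1); that is, 2 · |{(f, k, P) : 2 ≤ k ≤ n, P is a k-pattern, and the sample f matches P}| = ∑_{k=2}^{n} (n!/(n-k)!) · m^(n-k+1). -/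
theorem card_matches {n m : ℕ} (P : Fin n → Option (ZMod m)) :
    Nat.card {f : Fin n → ZMod m // Matches f P} = m ^ Nat.card {i // P i = none} := by
  classical
  have hfactor (i : Fin n) :
      Nat.card {x : ZMod m // ∀ c, P i = some c → x = c} = if P i = none then m else 1 := by
    cases h : P i with
    | none => simp [Nat.card_zmod]
    | some c => simp
  refine (Nat.card_congr (Equiv.subtypePiEquivPi (β := fun _ : Fin n => ZMod m)
    (p := fun i x => ∀ c, P i = some c → x = c))).trans ?_
  simp only [Nat.card_pi, hfactor, Finset.prod_ite, Finset.prod_const, one_pow,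
    mul_one, Nat.card_eq_fintype_card, Fintype.card_subtype]

section Patterns

open Finset

variable {n m k l : ℕ}

/-- The truncated subtraction `j - 1` puts both `e 0` and `e 1` on chair `c`. -/
noncomputable def patternOf (c : ZMod m) (e : Fin k ↪ Fin n) : Fin n → Option (ZMod m) :=
  Function.extend e (fun j => some (c + ((j - 1 : ℕ) : ZMod m))) fun _ => none

theorem patternOf_apply_embedding (c : ZMod m) (e : Fin k ↪ Fin n) (j : Fin k) :
    patternOf c e (e j) = some (c + ((j - 1 : ℕ) : ZMod m)) :=
  e.injective.extend_apply _ _ j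

theorem patternOf_eq_none_iff {c : ZMod m} {e : Fin k ↪ Fin n} {i : Fin n} :
    patternOf c e i = none ↔ i ∉ Set.range e := by
  constructor
  · rintro h ⟨j, rfl⟩
    simp [patternOf_apply_embedding] at h
  · exact Function.extend_apply' _ _ i

theorem patternOf_eq_some_iff {c x : ZMod m} {e : Fin k ↪ Fin n} {i : Fin n} :
    patternOf c e i = some x ↔ ∃ j, e j = i ∧ c + ((j - 1 : ℕ) : ZMod m) = x := by
  constructor
  · intro h
    obtain ⟨j, rfl⟩ : i ∈ Set.range e := by
      by_contra hi
      simp [patternOf_eq_none_iff.mpr hi] at h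
    exact ⟨j, rfl, by simpa [patternOf_apply_embedding] using h⟩
  · rintro ⟨j, rfl, rfl⟩
    exact patternOf_apply_embedding c e j

theorem card_patternOf_eq_none (c : ZMod m) (e : Fin k ↪ Fin n) :
    Nat.card {i // patternOf c e i = none} = n - k := by
  classical
  simp only [patternOf_eq_none_iff, Nat.card_eq_fintype_card, Fintype.card_subtype_compl,
    Fintype.card_range, Fintype.card_fin]

theorem natCast_sub_one_eq_natCast_iff (hl : l < m) (j : Fin (l + 2)) {a : ℕ} (ha : a < m) :
    ((j - 1 : ℕ) : ZMod m) = a ↔ (j : ℕ) - 1 = a :=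
  ⟨fun h => CharP.natCast_injOn_Iio (ZMod m) m (by simp; omega) ha h, congrArg _⟩

theorem natCast_sub_one_inj (hl : l < m) {j j' : Fin (l + 2)} :
    ((j - 1 : ℕ) : ZMod m) = ((j' - 1 : ℕ) : ZMod m) ↔ (j : ℕ) - 1 = j' - 1 :=
  natCast_sub_one_eq_natCast_iff hl j (by omega)

theorem Fin.eq_zero_or_eq_one_or_two_le (j : Fin (l + 2)) : j = 0 ∨ j = 1 ∨ 2 ≤ (j : ℕ) := by
  simp only [Fin.ext_iff, Fin.val_zero, Fin.val_one]
  omega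

theorem val_swap_zero_one_sub_one (j : Fin (l + 2)) :
    ((Equiv.swap 0 1 j : Fin (l + 2)) : ℕ) - 1 = j - 1 := by
  rcases j.eq_zero_or_eq_one_or_two_le with rfl | rfl | hj
  · simp
  · simp
  · rw [Equiv.swap_apply_of_ne_of_ne (by rintro rfl; simp at hj) (by rintro rfl; simp at hj)]

theorem eq_id_or_eq_swap_of_sub_one_comp {π : Fin (l + 2) → Fin (l + 2)}
    (hπ : Function.Injective π) (h : ∀ j, (π j : ℕ) - 1 = j - 1) :
    π = id ∨ π = Equiv.swap 0 1 := by
  have h01 : (π 0 : ℕ) ≠ π 1 := fun h' => zero_ne_one (hπ (Fin.ext h'))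
  have hπ01 : (π 0 : ℕ) - 1 = 0 ∧ (π 1 : ℕ) - 1 = 0 := ⟨h 0, h 1⟩
  rcases (by omega : (π 0 : ℕ) = 0 ∨ (π 0 : ℕ) = 1) with hz | hz
  · left
    funext j
    rcases j.eq_zero_or_eq_one_or_two_le with rfl | rfl | hj
    · exact Fin.ext hz
    · exact Fin.ext (by simp; omega)
    · exact Fin.ext (by have := h j; simp; omega)
  · right
    funext j
    rcases j.eq_zero_or_eq_one_or_two_le with rfl | rfl | hj
    · exact Fin.ext (by simpa using hz)
    · exact Fin.ext (by simp only [Equiv.swap_apply_right, Fin.val_zero]; omega)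
    · rw [Equiv.swap_apply_of_ne_of_ne (by rintro rfl; simp at hj) (by rintro rfl; simp at hj)]
      exact Fin.ext (by have := h j; omega)

theorem patternOf_swap_trans (c : ZMod m) (e : Fin (l + 2) ↪ Fin n) :
    patternOf c ((Equiv.swap 0 1).toEmbedding.trans e) = patternOf c e := by
  funext i
  refine Option.ext fun x => ?_
  simp only [patternOf_eq_some_iff]
  refine (Equiv.swap (0 : Fin (l + 2)) 1).exists_congr fun j => ?_
  rw [Function.Embedding.trans_apply, Equiv.coe_toEmbedding, val_swap_zero_one_sub_one]

theorem eq_and_eq_or_eq_swap_of_patternOf_eq (hl : l < m) {c c' : ZMod m}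
    {e e' : Fin (l + 2) ↪ Fin n} (h : patternOf c e = patternOf c' e') :
    c' = c ∧ (e' = e ∨ e' = (Equiv.swap 0 1).toEmbedding.trans e) := by
  have hmem (j : Fin (l + 2)) : ∃ j', e j' = e' j := by
    by_contra hj
    have : patternOf c e (e' j) = none := patternOf_eq_none_iff.mpr (by simpa using hj)
    rw [h, patternOf_apply_embedding] at this
    exact Option.some_ne_none _ this
  choose π hπ using hmem
  have hval (j : Fin (l + 2)) :
      c + ((π j - 1 : ℕ) : ZMod m) = c' + ((j - 1 : ℕ) : ZMod m) := by
    have := congrFun h (e' j)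
    rwa [← hπ, patternOf_apply_embedding, hπ, patternOf_apply_embedding, Option.some_inj] at this
  have hπinj : Function.Injective π := fun a b hab => e'.injective (by rw [← hπ, ← hπ, hab])
  have h01 : (π 0 : ℕ) - 1 = (π 1 : ℕ) - 1 :=
    (natCast_sub_one_inj hl).mp (add_left_cancel ((hval 0).trans (hval 1).symm))
  have hπ0 : (π 0 : ℕ) - 1 = 0 := by
    have : (π 0 : ℕ) ≠ π 1 := fun h' => zero_ne_one (hπinj (Fin.ext h'))
    omega
  have hc : c' = c := by simpa [hπ0] using (hval 0).symm
  subst hc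
  rcases eq_id_or_eq_swap_of_sub_one_comp hπinj
    fun j => (natCast_sub_one_inj hl).mp (add_left_cancel (hval j)) with hid | hswap
  · exact ⟨rfl, .inl (DFunLike.ext _ _ fun j => by rw [← hπ, hid, id])⟩
  · exact ⟨rfl, .inr (DFunLike.ext _ _ fun j => by rw [← hπ, hswap]; rfl)⟩

theorem patternOf_eq_of_forall {P : Fin n → Option (ZMod m)} {c : ZMod m} {e : Fin l ↪ Fin n}
    (he : ∀ j, P (e j) = some (c + ((j - 1 : ℕ) : ZMod m)))
    (hrange : ∀ i, P i ≠ none → i ∈ Set.range e) : patternOf c e = P := by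
  funext i
  by_cases hi : i ∈ Set.range e
  · obtain ⟨j, rfl⟩ := hi
    rw [patternOf_apply_embedding, he]
  · rw [patternOf_eq_none_iff.mpr hi]
    exact (not_imp_comm.mp (hrange i) hi).symm

theorem injective_of_sub_one_eq {α : Type*} {E : Fin (l + 2) → α} (h01 : E 0 ≠ E 1)
    (hE : ∀ a b, E a = E b → (a : ℕ) - 1 = b - 1) : Function.Injective E := by
  intro a b hab
  have hab' := hE a b hab
  rcases a.eq_zero_or_eq_one_or_two_le with rfl | rfl | ha <;>
    rcases b.eq_zero_or_eq_one_or_two_le with rfl | rfl | hb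
  all_goals first
    | rfl | exact absurd hab h01 | exact absurd hab.symm h01
    | (simp at hab'; omega) | exact Fin.ext (by omega)

theorem setOf_patternOf_eq_some_add (hl : l < m) (c : ZMod m) (e : Fin (l + 2) ↪ Fin n)
    {a : ℕ} (ha : a ≤ l) :
    {i | patternOf c e i = some (c + a)} = e '' {j | (j : ℕ) - 1 = a} := by
  ext i
  simp only [Set.mem_ofPred_eq, patternOf_eq_some_iff, add_right_inj, Set.mem_image,
    natCast_sub_one_eq_natCast_iff hl _ (ha.trans_lt hl), and_comm]

theorem isPattern_patternOf (hl : l < m) (c : ZMod m) (e : Fin (l + 2) ↪ Fin n) :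
    IsPattern (l + 2) (patternOf c e) := by
  refine ⟨c, ?_, fun a ha₁ ha₂ => ?_, fun i x hx => ?_⟩
  · have hpair : {j : Fin (l + 2) | (j : ℕ) - 1 = 0} = {0, 1} := by
      ext j
      simp only [Set.mem_ofPred_eq, Set.mem_insert_iff, Set.mem_singleton_iff, Fin.ext_iff,
        Fin.val_zero, Fin.val_one]
      omega
    have hset := setOf_patternOf_eq_some_add hl c e (Nat.zero_le l)
    rw [Nat.cast_zero, add_zero, hpair, Set.image_pair] at hset
    change Set.ncard {i | patternOf c e i = some c} = 2
    rw [hset, Set.ncard_pair (e.injective.ne zero_ne_one)]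
  · have hsingle : {j : Fin (l + 2) | (j : ℕ) - 1 = a} = {⟨a + 1, by omega⟩} := by
      ext j
      simp only [Set.mem_ofPred_eq, Set.mem_singleton_iff, Fin.ext_iff]
      omega
    change Set.ncard {i | patternOf c e i = some (c + a)} = 1
    rw [setOf_patternOf_eq_some_add hl c e (a := a) (by omega), hsingle, Set.image_singleton,
      Set.ncard_singleton]
  · obtain ⟨j, rfl, rfl⟩ := patternOf_eq_some_iff.mp hx
    exact ⟨j - 1, by omega, rfl⟩

theorem exists_patternOf_eq_of_isPattern (hl : l < m) {P : Fin n → Option (ZMod m)}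
    (hP : IsPattern (l + 2) P) :
    ∃ (c : ZMod m) (e : Fin (l + 2) ↪ Fin n), patternOf c e = P := by
  obtain ⟨c, hcard₂, hcard₁, hchairs⟩ := hP
  simp only [Nat.add_sub_cancel] at hcard₁ hchairs
  obtain ⟨p, q, hpq, hpair⟩ : ∃ p q, p ≠ q ∧ {i | P i = some c} = {p, q} :=
    Set.ncard_eq_two.mp hcard₂
  have hsingle (t : Fin l) : ∃ u, {i | P i = some (c + ((t + 1 : ℕ) : ZMod m))} = {u} :=
    Set.ncard_eq_one.mp (hcard₁ (t + 1) (by omega) t.isLt)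
  choose u hu using hsingle
  have hc (i : Fin n) : P i = some c ↔ i = p ∨ i = q := by
    simpa using Set.ext_iff.mp hpair i
  have hu' (t : Fin l) (i : Fin n) : P i = some (c + ((t + 1 : ℕ) : ZMod m)) ↔ i = u t := by
    simpa using Set.ext_iff.mp (hu t) i
  let E : Fin (l + 2) → Fin n := Fin.cons p (Fin.cons q u)
  have hE (j : Fin (l + 2)) : P (E j) = some (c + ((j - 1 : ℕ) : ZMod m)) := by
    refine Fin.cases ?_ (Fin.cases ?_ fun t => ?_) j
    · simp [E, hc]
    · simp [E, hc]
    · simpa [E] using (hu' t (u t)).mpr rfl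
  have hEinj : Function.Injective E := injective_of_sub_one_eq (by simpa [E] using hpq)
    fun a b hab => (natCast_sub_one_inj hl).mp
      (add_left_cancel (Option.some_inj.mp ((hE a).symm.trans (hab ▸ hE b))))
  refine ⟨c, ⟨E, hEinj⟩, patternOf_eq_of_forall hE fun i hi => ?_⟩
  obtain ⟨x, hx⟩ := Option.ne_none_iff_exists'.mp hi
  obtain ⟨_ | t, ht, rfl⟩ := hchairs i x hx
  · rcases (hc i).mp (by simpa using hx) with rfl | rfl
    exacts [⟨0, rfl⟩, ⟨1, rfl⟩]
  · rw [(hu' ⟨t, ht⟩ i).mp hx]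
    exact ⟨Fin.succ (Fin.succ ⟨t, ht⟩), rfl⟩

theorem filter_patternOf_eq (hl : l < m) (c : ZMod m) (e : Fin (l + 2) ↪ Fin n) [NeZero m]
    [DecidableEq (Fin n → Option (ZMod m))] :
    univ.filter (fun x : ZMod m × (Fin (l + 2) ↪ Fin n) => patternOf x.1 x.2 = patternOf c e) =
      {(c, e), (c, (Equiv.swap 0 1).toEmbedding.trans e)} := by
  ext ⟨c', e'⟩
  simp only [mem_filter, mem_univ, true_and, mem_insert, mem_singleton, Prod.mk.injEq]
  constructor
  · intro h
    obtain ⟨rfl, he⟩ := eq_and_eq_or_eq_swap_of_patternOf_eq hl h.symm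
    simpa using he
  · rintro (⟨rfl, rfl⟩ | ⟨rfl, rfl⟩)
    exacts [rfl, patternOf_swap_trans _ _]

theorem two_mul_card_isPattern (hl : l < m) :
    2 * Nat.card {P : Fin n → Option (ZMod m) // IsPattern (l + 2) P} =
      m * n.descFactorial (l + 2) := by
  classical
  have : NeZero m := ⟨by omega⟩
  let Φ (x : ZMod m × (Fin (l + 2) ↪ Fin n)) : Fin n → Option (ZMod m) := patternOf x.1 x.2
  have hpatterns : {P | IsPattern (l + 2) P} = (univ.image Φ : Set (Fin n → Option (ZMod m))) := by
    ext P
    simp only [Set.mem_ofPred_eq, coe_image, coe_univ, Set.image_univ,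
      Set.mem_range, Prod.exists, Φ]
    exact ⟨fun hP => exists_patternOf_eq_of_isPattern hl hP,
      fun ⟨c, e, hP⟩ => hP ▸ isPattern_patternOf hl c e⟩
  have hfiber : ∀ P ∈ univ.image Φ, #{x | Φ x = P} = 2 := by
    simp only [mem_image, mem_univ, true_and]
    rintro _ ⟨⟨c, e⟩, rfl⟩
    rw [filter_patternOf_eq hl c e, card_pair]
    exact fun h => zero_ne_one (e.injective (by simpa using congrArg (fun x => x.2 0) h))
  calc 2 * Nat.card {P : Fin n → Option (ZMod m) // IsPattern (l + 2) P}
      = 2 * #(univ.image Φ) := by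
        change 2 * Set.ncard {P | IsPattern (l + 2) P} = _
        rw [hpatterns, Set.ncard_coe_finset]
    _ = ∑ P ∈ univ.image Φ, #{x | Φ x = P} := by
        rw [sum_congr rfl hfiber, sum_const, smul_eq_mul, mul_comm]
    _ = Fintype.card (ZMod m × (Fin (l + 2) ↪ Fin n)) := (card_eq_sum_card_image _ _).symm
    _ = m * n.descFactorial (l + 2) := by
        simp [Fintype.card_prod, ZMod.card, Fintype.card_embedding_eq]

end Patterns

theorem two_mul_card_matches_isPattern {n m k : ℕ} (hk : 2 ≤ k) (hkm : k ≤ m + 1) :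
    2 * Nat.card {x : (Fin n → ZMod m) × (Fin n → Option (ZMod m)) //
        IsPattern k x.2 ∧ Matches x.1 x.2} = n.descFactorial k * m ^ (n - k + 1) := by
  classical
  obtain ⟨l, rfl⟩ := Nat.exists_eq_add_of_le' hk
  have : NeZero m := ⟨by omega⟩
  have hfactor (P : {P : Fin n → Option (ZMod m) // IsPattern (l + 2) P}) :
      Nat.card {f : Fin n → ZMod m // Matches f P} = m ^ (n - (l + 2)) := by
    obtain ⟨c, e, hP⟩ := exists_patternOf_eq_of_isPattern (by omega) P.2
    rw [card_matches, ← hP, card_patternOf_eq_none]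
  let sigmaEquiv : {x : (Fin n → ZMod m) × (Fin n → Option (ZMod m)) //
      IsPattern (l + 2) x.2 ∧ Matches x.1 x.2} ≃
      Σ P : {P : Fin n → Option (ZMod m) // IsPattern (l + 2) P}, {f // Matches f P} :=
    { toFun x := ⟨⟨x.1.2, x.2.1⟩, ⟨x.1.1, x.2.2⟩⟩
      invFun y := ⟨(y.2.1, y.1.1), y.1.2, y.2.2⟩ }
  rw [Nat.card_congr sigmaEquiv, Nat.card_sigma, Finset.sum_congr rfl fun P _ => hfactor P,
    Finset.sum_const, smul_eq_mul, Finset.card_univ, ← Nat.card_eq_fintype_card, ← mul_assoc,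
    two_mul_card_isPattern (by omega), pow_succ]
  ring

theorem stmt8_general (n m : ℕ) (h2 : n ≤ m) :
    2 * Nat.card {x : (Fin n → ZMod m) × ℕ × (Fin n → Option (ZMod m)) //
        2 ≤ x.2.1 ∧ x.2.1 ≤ n ∧ IsPattern x.2.1 x.2.2 ∧ Matches x.1 x.2.2} =
      ∑ k ∈ Finset.Icc 2 n, n.descFactorial k * m ^ (n - k + 1) := by
  let sigmaEquiv : {x : (Fin n → ZMod m) × ℕ × (Fin n → Option (ZMod m)) //
      2 ≤ x.2.1 ∧ x.2.1 ≤ n ∧ IsPattern x.2.1 x.2.2 ∧ Matches x.1 x.2.2} ≃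
      Σ k : Finset.Icc 2 n, {x : (Fin n → ZMod m) × (Fin n → Option (ZMod m)) //
        IsPattern k x.2 ∧ Matches x.1 x.2} :=
    { toFun x :=
        ⟨⟨x.1.2.1, Finset.mem_Icc.mpr ⟨x.2.1, x.2.2.1⟩⟩, ⟨(x.1.1, x.1.2.2), x.2.2.2⟩⟩
      invFun y := ⟨(y.2.1.1, y.1.1, y.2.1.2), (Finset.mem_Icc.mp y.1.2).1,
        (Finset.mem_Icc.mp y.1.2).2, y.2.2⟩ }
  have (k : Finset.Icc 2 n) :
      Finite {x : (Fin n → ZMod m) × (Fin n → Option (ZMod m)) //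
        IsPattern k x.2 ∧ Matches x.1 x.2} :=
    have : NeZero m := ⟨by have := Finset.mem_Icc.mp k.2; omega⟩
    inferInstance
  rw [Nat.card_congr sigmaEquiv, Nat.card_sigma, Finset.mul_sum,
    ← Finset.sum_coe_sort (Finset.Icc 2 n)]
  refine Finset.sum_congr rfl fun k _ => ?_
  obtain ⟨hk2, hkn⟩ := Finset.mem_Icc.mp k.2
  exact two_mul_card_matches_isPattern hk2 (by omega)

theorem stmt8 (n m : ℕ) (h1 : 2 ≤ n) (h2 : n ≤ m) :
    2 * Nat.card {x : (Fin n → ZMod m) × ℕ × (Fin n → Option (ZMod m)) //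
        2 ≤ x.2.1 ∧ x.2.1 ≤ n ∧ IsPattern x.2.1 x.2.2 ∧ Matches x.1 x.2.2} =
      ∑ k ∈ Finset.Icc 2 n, n.descFactorial k * m ^ (n - k + 1) :=
  stmt8_general n m h2
end
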